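/- Let K ≥ 1 and n ≥ 1, and let 0 < λ_1 ≤ λ_2 ≤ … ≤ λ_K. For each type k let P_1^k, …, P_n^k be mutually independent random variables, with P_i^k exponentially distributed with mean λ_k. With C_OPT = Σ_j P_j + Σ_{1≤i<j≤N} min(P_i, P_j) over all N = nK jobs, one has E[C_OPT] ≥ (n²/4)·Σ_{ℓ=1}^K λ_ℓ. -/

import Mathlib

/-!
If `X` and `Y` are independent with `P(X > t) = exp(-a t)` and `P(Y > t) = exp(-b t)`, then
`P(min X Y > t) = exp(-(a + b) t)`, so `E[min X Y] = (a + b)⁻¹`: two distinct jobs of type `k`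
contribute `λ_k / 2`, and every pair contributes a nonnegative amount. Counting each unordered pair
twice and the diagonal `min P_p P_p = P_p` once more,
`2 E[C_OPT] = ∑_{p,q} E[min P_p P_q] + ∑_p λ_p`, and keeping only the `n²` ordered pairs of each
type (where `E[P_p] = λ_k ≥ λ_k / 2` on the diagonal) bounds this below by `n² ∑_k λ_k / 2`.
-/

open MeasureTheory ProbabilityTheory Finset Real Set

lemma expMeasure_Ioi {r t : ℝ} (hr : 0 < r) (ht : 0 ≤ t) :
    expMeasure r (Ioi t) = ENNReal.ofReal (exp (-(r * t))) := by
  have := isProbabilityMeasure_expMeasure hr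
  rw [← ofReal_measureReal, ← compl_Iic, probReal_compl_eq_one_sub measurableSet_Iic,
    ← cdf_eq_real, cdf_expMeasure_eq hr, if_pos ht, sub_sub_cancel]

section ExpTail

variable {Ω : Type*} [MeasurableSpace Ω] {μ : Measure Ω}

def HasExpTail (μ : Measure Ω) (X : Ω → ℝ) (r : ℝ) : Prop :=
  ∀ t, 0 ≤ t → μ {ω | t < X ω} = ENNReal.ofReal (exp (-(r * t)))

lemma hasExpTail_of_map_eq_expMeasure {X : Ω → ℝ} {r : ℝ} (hX : AEMeasurable X μ) (hr : 0 < r)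
    (h : μ.map X = expMeasure r) : HasExpTail μ X r := fun t ht => by
  rw [← expMeasure_Ioi hr ht, ← h, Measure.map_apply_of_aemeasurable hX measurableSet_Ioi]
  rfl

namespace HasExpTail

variable {X Y : Ω → ℝ} {a b r : ℝ}

lemma min_of_indepFun (hX : HasExpTail μ X a) (hY : HasExpTail μ Y b) (hXY : IndepFun X Y μ) :
    HasExpTail μ (fun ω => min (X ω) (Y ω)) (a + b) := fun t ht => by
  have hinter : {ω | t < min (X ω) (Y ω)} = X ⁻¹' Ioi t ∩ Y ⁻¹' Ioi t := by
    ext ω; simp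
  rw [hinter, hXY.measure_inter_preimage_eq_mul _ _ measurableSet_Ioi measurableSet_Ioi]
  simp only [Set.preimage, Set.mem_Ioi]
  rw [hX t ht, hY t ht, ← ENNReal.ofReal_mul (exp_nonneg _), ← exp_add]
  ring_nf

variable [IsProbabilityMeasure μ]

lemma ae_pos (h : HasExpTail μ X r) (hX : AEMeasurable X μ) : ∀ᵐ ω ∂μ, 0 < X ω := by
  rw [ae_iff_measure_eq (nullMeasurableSet_lt aemeasurable_const hX), h 0 le_rfl]
  simp

lemma lintegral_eq (h : HasExpTail μ X r) (hX : AEMeasurable X μ) (hr : 0 < r) :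
    ∫⁻ ω, ENNReal.ofReal (X ω) ∂μ = ENNReal.ofReal r⁻¹ := by
  rw [lintegral_eq_lintegral_meas_lt μ ((h.ae_pos hX).mono fun _ => le_of_lt) hX,
    setLIntegral_congr_fun measurableSet_Ioi fun t ht => h t (le_of_lt ht),
    ← ofReal_integral_eq_lintegral_ofReal]
  · have := integral_comp_mul_left_Ioi (fun x => exp (-x)) 0 hr
    rw [mul_zero, integral_exp_neg_Ioi_zero, smul_eq_mul, mul_one] at this
    rw [this]
  · simpa [neg_mul, IntegrableOn] using exp_neg_integrableOn_Ioi 0 hr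
  · exact ae_of_all _ fun t => exp_nonneg _

lemma integrable (h : HasExpTail μ X r) (hX : AEMeasurable X μ) (hr : 0 < r) : Integrable X μ := by
  rw [← lintegral_ofReal_ne_top_iff_integrable hX.aestronglyMeasurable
    ((h.ae_pos hX).mono fun _ => le_of_lt), h.lintegral_eq hX hr]
  exact ENNReal.ofReal_ne_top

lemma integral_eq (h : HasExpTail μ X r) (hX : AEMeasurable X μ) (hr : 0 < r) :
    ∫ ω, X ω ∂μ = r⁻¹ := by
  rw [integral_eq_lintegral_of_nonneg_ae ((h.ae_pos hX).mono fun _ => le_of_lt)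
    hX.aestronglyMeasurable, h.lintegral_eq hX hr, ENNReal.toReal_ofReal (by positivity)]

lemma integral_min_of_indepFun (hX : HasExpTail μ X a) (hY : HasExpTail μ Y b)
    (hXY : IndepFun X Y μ) (hXm : AEMeasurable X μ) (hYm : AEMeasurable Y μ) (ha : 0 < a)
    (hb : 0 < b) : ∫ ω, min (X ω) (Y ω) ∂μ = (a + b)⁻¹ :=
  (hX.min_of_indepFun hY hXY).integral_eq (hXm.min hYm) (add_pos ha hb)

end HasExpTail

lemma inv_two_mul_le_integral_min_of_iIndepFun {ι : Type*} [IsProbabilityMeasure μ]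
    {X : ι → Ω → ℝ} {r : ℝ} (hX : ∀ i, AEMeasurable (X i) μ) (htail : ∀ i, HasExpTail μ (X i) r)
    (hr : 0 < r) (hindep : iIndepFun X μ) (i j : ι) :
    (2 * r)⁻¹ ≤ ∫ ω, min (X i ω) (X j ω) ∂μ := by
  rcases eq_or_ne i j with rfl | hij
  · simp only [min_self, (htail i).integral_eq (hX i) hr]
    exact inv_anti₀ hr (by linarith)
  · rw [(htail i).integral_min_of_indepFun (htail j) (hindep.indepFun hij) (hX i) (hX j) hr hr,
      two_mul]

end ExpTail

lemma sum_sum_eq_two_nsmul_sum_sum_Ioi_add_sum {ι M : Type*} [Fintype ι] [LinearOrder ι]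
    [LocallyFiniteOrderTop ι] [AddCommMonoid M] (f : ι → ι → M) (hf : ∀ i j, f i j = f j i) :
    ∑ i, ∑ j, f i j = 2 • ∑ i, ∑ j ∈ Ioi i, f i j + ∑ i, f i i := by
  have hsplit : ∀ i j, f i j = ((if i < j then f i j else 0) + if j < i then f j i else 0) +
      if i = j then f i i else 0 := by
    intro i j
    rcases lt_trichotomy i j with h | rfl | h
    · simp [h, h.ne, h.not_gt]
    · simp
    · simp [h, h.ne', h.not_gt, hf i j]
  have hIoi : ∀ i, ∑ j, (if i < j then f i j else 0) = ∑ j ∈ Ioi i, f i j := fun i => by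
    rw [← sum_filter, filter_lt_eq_Ioi]
  calc ∑ i, ∑ j, f i j
      = ∑ i, ∑ j, (if i < j then f i j else 0) + ∑ i, ∑ j, (if j < i then f j i else 0) +
          ∑ i, ∑ j, (if i = j then f i i else 0) := by
        simp only [← sum_add_distrib, ← hsplit]
    _ = 2 • ∑ i, ∑ j ∈ Ioi i, f i j + ∑ i, f i i := by
        rw [sum_comm (f := fun i j => if j < i then f j i else 0)]
        simp only [hIoi, sum_ite_eq, Finset.mem_univ, if_true, two_nsmul]

lemma card_sq_mul_sum_le_sum_sum {κ ι : Type*} [Fintype κ] [Fintype ι]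
    (G : κ × ι → κ × ι → ℝ) (c : κ → ℝ) (hG : ∀ p q, 0 ≤ G p q)
    (hc : ∀ k i j, c k ≤ G (k, i) (k, j)) :
    (Fintype.card ι : ℝ) ^ 2 * ∑ k, c k ≤ ∑ p, ∑ q, G p q := by
  calc (Fintype.card ι : ℝ) ^ 2 * ∑ k, c k = ∑ k, ∑ i : ι, ∑ j : ι, c k := by
        simp only [sum_const, card_univ, nsmul_eq_mul, Finset.mul_sum]
        exact sum_congr rfl fun k _ => by ring
    _ ≤ ∑ k, ∑ i, ∑ j, G (k, i) (k, j) := by gcongr with k _ i _ j; exact hc k i j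
    _ ≤ ∑ k, ∑ i, ∑ l, ∑ j, G (k, i) (l, j) := by
        gcongr with k _ i _
        exact single_le_sum (f := fun l => ∑ j, G (k, i) (l, j))
          (fun l _ => sum_nonneg fun j _ => hG _ _) (mem_univ k)
    _ = ∑ p, ∑ q, G p q := by simp only [Fintype.sum_prod_type]

section FlowTime

variable {Ω ι : Type*} [MeasurableSpace Ω] {μ : Measure Ω} [Fintype ι] [LinearOrder ι]
  [LocallyFiniteOrderTop ι]

lemma two_mul_integral_sum_add_sum_Ioi_min {X : ι → Ω → ℝ} (hX : ∀ i, Integrable (X i) μ) :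
    2 * ∫ ω, (∑ j, X j ω + ∑ i, ∑ j ∈ Ioi i, min (X i ω) (X j ω)) ∂μ =
      ∑ i, ∑ j, ∫ ω, min (X i ω) (X j ω) ∂μ + ∑ i, ∫ ω, X i ω ∂μ := by
  have hmin : ∀ i j, Integrable (fun ω => min (X i ω) (X j ω)) μ := fun i j => (hX i).inf (hX j)
  have hpoint : ∀ ω, 2 * (∑ j, X j ω + ∑ i, ∑ j ∈ Ioi i, min (X i ω) (X j ω)) =
      ∑ i, ∑ j, min (X i ω) (X j ω) + ∑ i, X i ω := fun ω => by
    rw [sum_sum_eq_two_nsmul_sum_sum_Ioi_add_sum _ fun i j => min_comm _ _]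
    simp only [min_self, two_nsmul]
    ring
  rw [← integral_const_mul, funext hpoint, integral_add (integrable_finsetSum _ fun i _ =>
    integrable_finsetSum _ fun j _ => hmin i j) (integrable_finsetSum _ fun i _ => hX i),
    integral_finsetSum _ fun i _ => integrable_finsetSum _ fun j _ => hmin i j,
    integral_finsetSum _ fun i _ => hX i]
  simp only [integral_finsetSum _ fun j _ => hmin _ j]

end FlowTime

theorem stmt_19_general
    {Ω : Type*} [MeasurableSpace Ω] (μ : Measure Ω) [IsProbabilityMeasure μ]
    (K n : ℕ)
    (lam : Fin K → ℝ) (hpos : ∀ k, 0 < lam k)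
    (P : Fin K → Fin n → Ω → ℝ)
    (hmeas : ∀ k i, Measurable (P k i))
    (hdist : ∀ k i, Measure.map (P k i) μ = expMeasure (1 / lam k))
    (hindep : iIndepFun
      (fun p : Fin K × Fin n => P p.1 p.2) μ)
    (e : Fin (n * K) ≃ Fin K × Fin n)
    (COPT : Ω → ℝ)
    (hCOPT : ∀ ω, COPT ω =
      (∑ j : Fin (n * K), P (e j).1 (e j).2 ω) +
      ∑ i : Fin (n * K), ∑ j ∈ Finset.Ioi i,
        min (P (e i).1 (e i).2 ω) (P (e j).1 (e j).2 ω)) :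
    ∫ ω, COPT ω ∂μ ≥ (n : ℝ) ^ 2 / 4 * ∑ l, lam l := by
  set X : Fin K × Fin n → Ω → ℝ := fun p => P p.1 p.2
  have hrate : ∀ k, 0 < 1 / lam k := fun k => one_div_pos.2 (hpos k)
  have hXm : ∀ p, AEMeasurable (X p) μ := fun p => (hmeas p.1 p.2).aemeasurable
  have htail : ∀ p, HasExpTail μ (X p) (1 / lam p.1) := fun p =>
    hasExpTail_of_map_eq_expMeasure (hXm p) (hrate p.1) (hdist p.1 p.2)
  have hmean : ∀ p, ∫ ω, X p ω ∂μ = lam p.1 := fun p => by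
    rw [(htail p).integral_eq (hXm p) (hrate p.1), one_div, inv_inv]
  have hsame : ∀ k i j, lam k / 2 ≤ ∫ ω, min (X (k, i) ω) (X (k, j) ω) ∂μ := fun k i j => by
    convert inv_two_mul_le_integral_min_of_iIndepFun (fun i => hXm (k, i)) (fun i => htail (k, i))
      (hrate k) (hindep.precomp (Prod.mk_right_injective k)) i j using 1
    field_simp
  have hnonneg : ∀ p q, 0 ≤ ∫ ω, min (X p ω) (X q ω) ∂μ := fun p q => integral_nonneg_of_ae <| by
    filter_upwards [(htail p).ae_pos (hXm p), (htail q).ae_pos (hXm q)] with ω hp hq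
    exact le_min hp.le hq.le
  have hdouble : 2 * ∫ ω, COPT ω ∂μ =
      ∑ p, ∑ q, ∫ ω, min (X p ω) (X q ω) ∂μ + ∑ p : Fin K × Fin n, lam p.1 := by
    rw [funext hCOPT, two_mul_integral_sum_add_sum_Ioi_min fun j =>
      (htail (e j)).integrable (hXm _) (hrate _)]
    simp only [hmean]
    congr 1
    · exact Fintype.sum_equiv e _ _ fun i => Fintype.sum_equiv e _ _ fun j => rfl
    · exact Fintype.sum_equiv e _ _ fun j => rfl
  have hpairs := card_sq_mul_sum_le_sum_sum _ _ hnonneg hsame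
  rw [Fintype.card_fin, ← sum_div] at hpairs
  linarith [sum_nonneg (s := univ) fun (p : Fin K × Fin n) _ => (hpos p.1).le]

/-- Lower bound on the optimal expected flow time:
`E[C_OPT] ≥ (n²/4) * Σ_ℓ λ_ℓ`. -/
theorem stmt_19
    {Ω : Type*} [MeasurableSpace Ω] (μ : Measure Ω) [IsProbabilityMeasure μ]
    (K n : ℕ) (hK : 1 ≤ K) (hn : 1 ≤ n)
    (lam : Fin K → ℝ) (hpos : ∀ k, 0 < lam k) (hmono : Monotone lam)
    (P : Fin K → Fin n → Ω → ℝ)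
    (hmeas : ∀ k i, Measurable (P k i))
    (hdist : ∀ k i, Measure.map (P k i) μ = expMeasure (1 / lam k))
    (hindep : iIndepFun
      (fun p : Fin K × Fin n => P p.1 p.2) μ)
    (e : Fin (n * K) ≃ Fin K × Fin n)
    (COPT : Ω → ℝ)
    (hCOPT : ∀ ω, COPT ω =
      (∑ j : Fin (n * K), P (e j).1 (e j).2 ω) +
      ∑ i : Fin (n * K), ∑ j ∈ Finset.Ioi i,
        min (P (e i).1 (e i).2 ω) (P (e j).1 (e j).2 ω)) :
    ∫ ω, COPT ω ∂μ ≥ (n : ℝ) ^ 2 / 4 * ∑ l, lam l :=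
  stmt_19_general μ K n lam hpos P hmeas hdist hindep e COPT hCOPT
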